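/- arXiv:math/9908139 — 2 statements merged into one kernel-verified Lean document; each statement's English description precedes it below -/
import Mathlib

section
/- Let L be a Lie algebra over a field K of characteristic zero with basis X₁,…,Xₙ, and let 𝒜 be the free associative K-algebra on X₁,…,Xₙ with J the two-sided ideal generated by the elements XY − YX − [X,Y] for X, Y ∈ L. Then every element of 𝒜 is congruent modulo J to a regular polynomial (a K-linear combination of powers of K-linear combinations of the generators). -/
open scoped BigOperators

noncomputable section

/-- The word `X₁^{α₁} ⋯ Xₙ^{αₙ}` as a list of generator indices. -/
def word (n : ℕ) (α : Fin n → ℕ) : List (Fin n) :=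
  (List.finRange n).flatMap fun i => List.replicate (α i) i

/-- The symmetrization `symz(X^(α)) = (1/m!) ∑_{σ ∈ Σₘ} X'_{σ(1)} ⋯ X'_{σ(m)}`
of the monomial `X^(α)` in the free associative algebra. -/
def symz (K : Type) [Field K] (n : ℕ) (α : Fin n → ℕ) : FreeAlgebra K (Fin n) :=
  ((Nat.factorial (word n α).length : K))⁻¹ •
    ∑ σ : Equiv.Perm (Fin (word n α).length),
      (List.ofFn fun j => FreeAlgebra.ι K ((word n α).get (σ j))).prod

/-- Regular homogeneous polynomials of degree `m`: the span of `m`-th powers of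
linear forms in the generators. -/
def RegHom (K : Type) [Field K] (n m : ℕ) : Submodule K (FreeAlgebra K (Fin n)) :=
  Submodule.span K {x | ∃ c : Fin n → K, x = (∑ i, c i • FreeAlgebra.ι K i) ^ m}

/-- Regular polynomials: the span of all powers of linear forms in the generators. -/
def Reg (K : Type) [Field K] (n : ℕ) : Submodule K (FreeAlgebra K (Fin n)) :=
  Submodule.span K {x | ∃ (m : ℕ) (c : Fin n → K), x = (∑ i, c i • FreeAlgebra.ι K i) ^ m}

/-- The symmetrization map `Φ` from commutative polynomials to the free algebra,
sending `x^(α)` to `symz(X^(α))` and extended linearly. -/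
def Phi (K : Type) [Field K] (n : ℕ) (p : MvPolynomial (Fin n) K) : FreeAlgebra K (Fin n) :=
  ∑ d ∈ p.support, p.coeff d • symz K n (fun i => d i)


/-- The embedding of the Lie algebra `L` into the free algebra via the basis `b`. -/
def emb (K : Type) [Field K] (n : ℕ) {L : Type} [LieRing L] [LieAlgebra K L]
    (b : Module.Basis (Fin n) K L) (x : L) : FreeAlgebra K (Fin n) :=
  ∑ k, b.repr x k • FreeAlgebra.ι K k

/-- The two-sided ideal `J` generated by `XY - YX - [X,Y]`, `X, Y ∈ L`, realized as the
span of all trinomial products `P (XY - YX - [X,Y]) Q`. -/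
def Jspan (K : Type) [Field K] (n : ℕ) {L : Type} [LieRing L] [LieAlgebra K L]
    (b : Module.Basis (Fin n) K L) : Submodule K (FreeAlgebra K (Fin n)) :=
  Submodule.span K {x | ∃ (P Q : FreeAlgebra K (Fin n)) (X Y : L),
    x = P * (emb K n b X * emb K n b Y - emb K n b Y * emb K n b X - emb K n b ⁅X, Y⁆) * Q}

/-- Elements of degree at most `k` in the free algebra. -/
def Fdeg (K : Type) [Field K] (n k : ℕ) : Submodule K (FreeAlgebra K (Fin n)) :=
  Submodule.span K {x | ∃ l : List (Fin n), l.length ≤ k ∧ x = (l.map (FreeAlgebra.ι K)).prod}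

/-!
Modulo `J` and lower-degree terms the letters of a word commute: `XᵢXⱼ - XⱼXᵢ` is `[Xᵢ, Xⱼ]`
modulo `J`, which has degree one. Hence a word of length `m` is congruent, modulo `J` and
degree `< m`, to the average of its `m!` rearrangements (dividing by `m!` needs `char K = 0`).
That average is regular by polarization: the sum over all rearrangements of `x₁ ⋯ xₘ` is an
alternating sum of the powers `(∑_{j ∈ S} xⱼ)^m`, `S ⊆ {1, …, m}`. Induction on the degree
finishes the proof.
-/

open Finset

theorem sum_pow_eq_sum_piFinset_prod_ofFn {R ι : Type*} [Semiring R] (s : Finset ι)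
    (x : ι → R) (m : ℕ) :
    (∑ j ∈ s, x j) ^ m = ∑ f ∈ Fintype.piFinset fun _ : Fin m ↦ s, (List.ofFn (x ∘ f)).prod := by
  classical
  simpa [MultilinearMap.mkPiAlgebraFin_apply, Function.comp_def] using
    (MultilinearMap.mkPiAlgebraFin ℕ m R).map_sum_finset (fun _ ↦ x) (fun _ ↦ s)

/-- Noncommutative polarization: expanding the powers, inclusion-exclusion over the points missed
by `f : Fin m → Fin m` keeps exactly the surjective, i.e. bijective, `f`. -/
theorem sum_perm_prod_ofFn_eq_sum_powerset {R : Type*} [Ring R] {m : ℕ} (x : Fin m → R) :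
    ∑ σ : Equiv.Perm (Fin m), (List.ofFn (x ∘ σ)).prod =
      ∑ t ∈ univ.powerset, (-1 : ℤ) ^ #t • (∑ j ∈ tᶜ, x j) ^ m := by
  classical
  let avoiding (i : Fin m) : Finset (Fin m → Fin m) := {f | i ∉ Set.range f}
  have hsurj : (univ.inf fun i ↦ (avoiding i)ᶜ) = univ.image (⇑· : Equiv.Perm (Fin m) → _) := by
    ext f
    simp only [avoiding, mem_inf, mem_compl, mem_filter, mem_univ, true_and, not_not, mem_image,
      forall_const]
    refine ⟨fun hf ↦ ⟨Equiv.ofBijective f ⟨Finite.injective_iff_surjective.2 hf, hf⟩, rfl⟩, ?_⟩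
    rintro ⟨σ, rfl⟩
    exact σ.surjective
  have hinto (t : Finset (Fin m)) : t.inf avoiding = Fintype.piFinset fun _ ↦ tᶜ := by
    ext f
    simp only [avoiding, mem_inf, mem_filter, mem_univ, true_and, Set.mem_range, not_exists,
      Fintype.mem_piFinset, mem_compl]
    exact ⟨fun h k hk ↦ h _ hk k rfl, fun h i hi k hk ↦ h k (hk ▸ hi)⟩
  have := inclusion_exclusion_sum_inf_compl univ avoiding fun f ↦ (List.ofFn (x ∘ f)).prod
  rw [hsurj, sum_image fun σ _ τ _ h ↦ Equiv.coe_fn_injective h] at this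
  simp only [this, hinto, sum_pow_eq_sum_piFinset_prod_ofFn]

section FreeAlgebra

variable {K : Type} [Field K] {n : ℕ}

local notation "ι" => FreeAlgebra.ι K

theorem pow_mem_Reg {y : FreeAlgebra K (Fin n)}
    (hy : y ∈ Submodule.span K (Set.range ι)) (m : ℕ) : y ^ m ∈ Reg K n := by
  obtain ⟨c, rfl⟩ := Submodule.mem_span_range_iff_exists_fun K |>.1 hy
  exact Submodule.subset_span ⟨m, c, rfl⟩

theorem sum_perm_list_prod_mem_Reg {m : ℕ} (w : Fin m → Fin n) :
    ∑ σ : Equiv.Perm (Fin m), ((List.ofFn (w ∘ σ)).map ι).prod ∈ Reg K n := by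
  simp only [List.map_ofFn, ← Function.comp_assoc]
  rw [sum_perm_prod_ofFn_eq_sum_powerset]
  refine sum_mem fun t _ ↦ zsmul_mem (pow_mem_Reg (sum_mem fun j _ ↦ ?_) m) _
  exact Submodule.subset_span ⟨w j, rfl⟩

theorem list_prod_mem_Fdeg {l : List (Fin n)} {k : ℕ} (h : l.length ≤ k) :
    (l.map ι).prod ∈ Fdeg K n k :=
  Submodule.subset_span ⟨l, h, rfl⟩

theorem ι_mem_Fdeg_one (i : Fin n) : ι i ∈ Fdeg K n 1 := by
  simpa using list_prod_mem_Fdeg (K := K) (l := [i]) le_rfl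

theorem Fdeg_mono {k k' : ℕ} (h : k ≤ k') : Fdeg K n k ≤ Fdeg K n k' :=
  Submodule.span_mono fun _ ⟨l, hl, e⟩ ↦ ⟨l, hl.trans h, e⟩

theorem Fdeg_mul_le (k k' : ℕ) : Fdeg K n k * Fdeg K n k' ≤ Fdeg K n (k + k') := by
  rw [Fdeg, Fdeg, Submodule.span_mul_span]
  refine Submodule.span_mono ?_
  rintro _ ⟨_, ⟨l, hl, rfl⟩, _, ⟨l', hl', rfl⟩, rfl⟩
  exact ⟨l ++ l', by simp only [List.length_append]; omega, by simp⟩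

theorem mul_mem_Fdeg {k k' : ℕ} {y z : FreeAlgebra K (Fin n)} (hy : y ∈ Fdeg K n k)
    (hz : z ∈ Fdeg K n k') : y * z ∈ Fdeg K n (k + k') :=
  Fdeg_mul_le k k' (Submodule.mul_mem_mul hy hz)

theorem exists_mem_Fdeg (a : FreeAlgebra K (Fin n)) : ∃ k, a ∈ Fdeg K n k := by
  induction a using FreeAlgebra.induction with
  | grade0 r =>
    refine ⟨0, ?_⟩
    rw [Algebra.algebraMap_eq_smul_one]
    exact Submodule.smul_mem _ _ (list_prod_mem_Fdeg (l := []) le_rfl)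
  | grade1 i => exact ⟨1, ι_mem_Fdeg_one i⟩
  | mul x y ihx ihy =>
    obtain ⟨k, hx⟩ := ihx
    obtain ⟨k', hy⟩ := ihy
    exact ⟨k + k', mul_mem_Fdeg hx hy⟩
  | add x y ihx ihy =>
    obtain ⟨k, hx⟩ := ihx
    obtain ⟨k', hy⟩ := ihy
    exact ⟨max k k', add_mem (Fdeg_mono (le_max_left k k') hx) (Fdeg_mono (le_max_right k k') hy)⟩

variable {L : Type} [LieRing L] [LieAlgebra K L] (b : Module.Basis (Fin n) K L)

theorem emb_basis (i : Fin n) : emb K n b (b i) = ι i := by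
  simp [emb, Finsupp.single_apply]

theorem emb_mem_Fdeg_one (X : L) : emb K n b X ∈ Fdeg K n 1 :=
  sum_mem fun i _ ↦ Submodule.smul_mem _ _ (ι_mem_Fdeg_one i)

theorem mul_mem_Jspan (P : FreeAlgebra K (Fin n)) {y : FreeAlgebra K (Fin n)}
    (hy : y ∈ Jspan K n b) : P * y ∈ Jspan K n b := by
  suffices Jspan K n b ≤ (Jspan K n b).comap (LinearMap.mulLeft K P) from this hy
  refine Submodule.span_le.2 ?_
  rintro _ ⟨P', Q, X, Y, rfl⟩
  exact Submodule.subset_span ⟨P * P', Q, X, Y, by simp only [LinearMap.mulLeft_apply, mul_assoc]⟩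

theorem mul_mem_Jspan_sup_Fdeg {k k' : ℕ} {y z : FreeAlgebra K (Fin n)} (hy : y ∈ Fdeg K n k)
    (hz : z ∈ Jspan K n b ⊔ Fdeg K n k') : y * z ∈ Jspan K n b ⊔ Fdeg K n (k + k') := by
  obtain ⟨j, hj, d, hd, rfl⟩ := Submodule.mem_sup.1 hz
  rw [mul_add]
  exact add_mem (Submodule.mem_sup_left (mul_mem_Jspan b y hj))
    (Submodule.mem_sup_right (mul_mem_Fdeg hy hd))

theorem ι_mul_ι_mul_sub_mem (i i' : Fin n) {k : ℕ} {Q : FreeAlgebra K (Fin n)}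
    (hQ : Q ∈ Fdeg K n k) :
    ι i * (ι i' * Q) - ι i' * (ι i * Q) ∈ Jspan K n b ⊔ Fdeg K n (1 + k) := by
  set e := emb K n b ⁅b i, b i'⁆
  have hJ : (ι i * ι i' - ι i' * ι i - e) * Q ∈ Jspan K n b :=
    Submodule.subset_span ⟨1, Q, b i, b i', by rw [emb_basis, emb_basis, one_mul]⟩
  convert add_mem (Submodule.mem_sup_left hJ)
    (Submodule.mem_sup_right (mul_mem_Fdeg (emb_mem_Fdeg_one b ⁅b i, b i'⁆) hQ)) using 1
  noncomm_ring

theorem list_prod_sub_mem_of_perm {l₁ l₂ : List (Fin n)} (h : l₁.Perm l₂) :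
    (l₁.map ι).prod - (l₂.map ι).prod ∈ Jspan K n b ⊔ Fdeg K n (l₁.length - 1) := by
  induction h with
  | nil => simp
  | @cons i t₁ t₂ h ih =>
    rcases t₁ with _ | ⟨j, t₁⟩
    · simp [List.nil_perm.1 h]
    simpa [mul_sub, add_comm] using mul_mem_Jspan_sup_Fdeg b (ι_mem_Fdeg_one i) ih
  | swap i i' t =>
    simpa [add_comm] using ι_mul_ι_mul_sub_mem b i' i (list_prod_mem_Fdeg (l := t) le_rfl)
  | @trans t₁ t₂ t₃ h₁₂ _ ih₁₂ ih₂₃ =>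
    rw [← sub_add_sub_cancel _ ((t₂.map ι).prod)]
    exact add_mem ih₁₂ (h₁₂.length_eq ▸ ih₂₃)

theorem list_prod_mem_Reg_sup [CharZero K] (l : List (Fin n)) :
    (l.map ι).prod ∈ Reg K n ⊔ (Jspan K n b ⊔ Fdeg K n (l.length - 1)) := by
  set w := (l.map ι).prod
  set rearrangement : Equiv.Perm (Fin l.length) → FreeAlgebra K (Fin n) :=
    fun σ ↦ ((List.ofFn (l.get ∘ σ)).map ι).prod
  have hfac : (l.length.factorial : K) ≠ 0 := Nat.cast_ne_zero.2 l.length.factorial_ne_zero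
  rw [← Submodule.smul_mem_iff _ hfac]
  have hsplit : (l.length.factorial : K) • w =
      ∑ σ, rearrangement σ + ∑ σ, (w - rearrangement σ) := by
    rw [← sum_add_distrib]
    simp only [add_sub_cancel, sum_const, card_univ, Fintype.card_perm, Fintype.card_fin,
      Nat.cast_smul_eq_nsmul]
  rw [hsplit]
  refine add_mem (Submodule.mem_sup_left (sum_perm_list_prod_mem_Reg l.get))
    (Submodule.mem_sup_right (sum_mem fun σ _ ↦ list_prod_sub_mem_of_perm b ?_))
  have := (Equiv.Perm.ofFn_comp_perm σ l.get).symm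
  rwa [List.ofFn_get] at this

theorem Fdeg_le_Reg_sup_Jspan [CharZero K] (m : ℕ) : Fdeg K n m ≤ Reg K n ⊔ Jspan K n b := by
  induction m with
  | zero =>
    refine Submodule.span_le.2 ?_
    rintro _ ⟨l, hl, rfl⟩
    rw [List.length_eq_zero_iff.1 (Nat.le_zero.1 hl)]
    exact Submodule.mem_sup_left (Submodule.subset_span ⟨0, 0, by simp⟩)
  | succ m ih =>
    refine Submodule.span_le.2 ?_
    rintro _ ⟨l, hl, rfl⟩
    refine sup_le le_sup_left (sup_le le_sup_right ((Fdeg_mono ?_).trans ih))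
      (list_prod_mem_Reg_sup b l)
    omega

end FreeAlgebra

theorem exists_regular_congruent_mod_J (K : Type) [Field K] [CharZero K]
    (n : ℕ) (L : Type) [LieRing L] [LieAlgebra K L] (b : Module.Basis (Fin n) K L)
    (a : FreeAlgebra K (Fin n)) :
    ∃ r ∈ Reg K n, a - r ∈ Jspan K n b := by
  obtain ⟨m, ha⟩ := exists_mem_Fdeg a
  obtain ⟨r, hr, j, hj, rfl⟩ := Submodule.mem_sup.1 (Fdeg_le_Reg_sup_Jspan b m ha)
  exact ⟨r, hr, by rwa [add_sub_cancel_left]⟩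

end
end

section
/- (Poincaré–Birkhoff–Witt, ordered monomial form) Let L be a Lie algebra over a field K of characteristic zero with basis X₁,…,Xₙ. The ordered monomials X₁^{α₁}X₂^{α₂}⋯Xₙ^{αₙ}, over all n-tuples (α₁,…,αₙ) of nonnegative integers, form a K-vector-space basis of the universal enveloping algebra U(L). -/
open scoped BigOperators

noncomputable section

/-!
Spanning: swapping two adjacent letters of a word changes it modulo `J` only by a shorter word,
so every word is congruent to its sorted rearrangement up to shorter words.

Independence (Jacobson's argument): `L` acts on the polynomial ring `K[x_1, …, x_n]` with
`X_i · x^γ = x^(γ + e_i)` whenever `i ≤ min γ`. The action is defined by recursion on the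
degree of `γ`, using `X_i X_j x^β = X_j X_i x^β + [X_i, X_j] x^β` to move a larger letter past
the smallest one, and it respects brackets by induction on the degree (Jacobi identity). It
therefore factors through `U(L)`, and the ordered monomial `X^α` sends `1` to `x^α`.
-/

open Finsupp

namespace PBW

section Representation

variable {K : Type*} [CommRing K] {ι : Type*}

def degLE (K ι : Type*) [CommRing K] (d : ℕ) : Submodule K ((ι →₀ ℕ) →₀ K) :=
  supported K K {γ | γ.degree ≤ d}

lemma degLE_mono {d e : ℕ} (h : d ≤ e) : degLE K ι d ≤ degLE K ι e :=
  supported_mono fun _ hγ => le_trans hγ h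

lemma single_mem_degLE {γ : ι →₀ ℕ} {d : ℕ} (h : γ.degree ≤ d) (c : K) :
    single γ c ∈ degLE K ι d :=
  single_mem_supported K c h

lemma linearCombination_mem_degLE {f : (ι →₀ ℕ) → (ι →₀ ℕ) →₀ K} {p : (ι →₀ ℕ) →₀ K}
    {d e : ℕ} (hp : p ∈ degLE K ι d) (hf : ∀ γ : ι →₀ ℕ, γ.degree ≤ d → f γ ∈ degLE K ι e) :
    linearCombination K f p ∈ degLE K ι e := by
  have : linearCombination K f p ∈ Submodule.span K (f '' {γ | γ.degree ≤ d}) := by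
    rw [span_image_eq_map_linearCombination]
    exact Submodule.mem_map_of_mem hp
  exact Submodule.span_le.2 (by rintro _ ⟨γ, hγ, rfl⟩; exact hf γ hγ) this

lemma linearCombination_congr_of_mem_degLE {f g : (ι →₀ ℕ) → (ι →₀ ℕ) →₀ K}
    {p : (ι →₀ ℕ) →₀ K} {d : ℕ} (hp : p ∈ degLE K ι d)
    (hfg : ∀ γ : ι →₀ ℕ, γ.degree ≤ d → f γ = g γ) :
    linearCombination K f p = linearCombination K g p := by
  simp only [linearCombination_apply]
  exact Finsupp.sum_congr fun γ hγ => by rw [hfg γ (hp hγ)]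

variable [LinearOrder ι]

lemma mem_support_add_single {β : ι →₀ ℕ} {j k : ι} :
    k ∈ (β + single j 1).support ↔ k ∈ β.support ∨ k = j := by
  simp only [mem_support_iff, coe_add, Pi.add_apply, single_apply]
  split_ifs with h <;> grind

lemma le_of_mem_support_add_single {β : ι →₀ ℕ} {j s : ι} (hβ : ∀ k ∈ β.support, j ≤ k)
    (hs : j ≤ s) : ∀ k ∈ (β + single s 1).support, j ≤ k := by
  intro k hk
  rcases mem_support_add_single.1 hk with hk | rfl
  exacts [hβ k hk, hs]

lemma exists_eq_add_single_of_not_le {γ : ι →₀ ℕ} {k : ι} (h : ¬ ∀ t ∈ γ.support, k ≤ t) :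
    ∃ β j, γ = β + single j 1 ∧ (∀ t ∈ β.support, j ≤ t) ∧ j < k := by
  push Not at h
  obtain ⟨t, ht, htk⟩ := h
  have hne : γ.support.Nonempty := ⟨t, ht⟩
  set j := γ.support.min' hne
  have hj : j ∈ γ.support := γ.support.min'_mem hne
  refine ⟨γ - single j 1, j, ?_, fun s hs => γ.support.min'_le s (support_tsub hs),
    (γ.support.min'_le t ht).trans_lt htk⟩
  exact (tsub_add_cancel_of_le <|
    single_le_iff.2 (Nat.one_le_iff_ne_zero.2 (mem_support_iff.1 hj))).symm

variable {L : Type*} [LieRing L] [LieAlgebra K L] (b : Module.Basis ι K L)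

/-- `actAux b m i α` computes `X_i · x^α` by recursion of depth `m`; it is correct once
`m ≥ deg α`. For `α = β + e_j` with `j = min α < i` it unfolds
`X_i X_j x^β = X_j X_i x^β + [X_i, X_j] x^β`, where `X_j x^(β + e_i) = x^(α + e_i)`. -/
def actAux : ℕ → ι → (ι →₀ ℕ) → (ι →₀ ℕ) →₀ K
  | 0, i, α => single (α + single i 1) 1
  | m + 1, i, α =>
    if h : ∀ k ∈ α.support, i ≤ k then single (α + single i 1) 1
    else
      let j := α.support.min' (by push Not at h; exact ⟨_, h.choose_spec.1⟩)
      let β := α - single j 1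
      single (α + single i 1) 1
        + linearCombination K (actAux m j) (actAux m i β - single (β + single i 1) 1)
        + linearCombination K (fun k => actAux m k β) (b.repr ⁅b i, b j⁆)

lemma actAux_of_le (m : ℕ) {i : ι} {α : ι →₀ ℕ} (h : ∀ k ∈ α.support, i ≤ k) :
    actAux b m i α = single (α + single i 1) 1 := by
  cases m with
  | zero => rfl
  | succ m => rw [actAux, dif_pos h]

lemma actAux_succ_add_single (m : ℕ) {i j : ι} {β : ι →₀ ℕ} (hβ : ∀ k ∈ β.support, j ≤ k)
    (hji : j < i) :
    actAux b (m + 1) i (β + single j 1) = single (β + single j 1 + single i 1) 1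
      + linearCombination K (actAux b m j) (actAux b m i β - single (β + single i 1) 1)
      + linearCombination K (fun k => actAux b m k β) (b.repr ⁅b i, b j⁆) := by
  have hj : j ∈ (β + single j 1).support := mem_support_add_single.2 (Or.inr rfl)
  have hmin : (β + single j 1).support.min' ⟨j, hj⟩ = j :=
    le_antisymm (Finset.min'_le _ _ hj)
      (Finset.le_min' _ _ _ (le_of_mem_support_add_single hβ le_rfl))
  have hnot : ¬ ∀ k ∈ (β + single j 1).support, i ≤ k := fun h => (h j hj).not_gt hji
  rw [actAux, dif_neg hnot]
  simp only [hmin, add_tsub_cancel_right]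

lemma actAux_sub_mem_degLE (m : ℕ) :
    ∀ (i : ι) (α : ι →₀ ℕ), α.degree ≤ m →
      actAux b m i α - single (α + single i 1) 1 ∈ degLE K ι α.degree := by
  induction m with
  | zero => intro i α _; simp [actAux]
  | succ m ih =>
    intro i α hα
    by_cases h : ∀ k ∈ α.support, i ≤ k
    · simp [actAux_of_le b _ h]
    obtain ⟨β, j, rfl, hβ, hji⟩ := exists_eq_add_single_of_not_le h
    have hdeg : (β + single j 1).degree = β.degree + 1 := by simp
    have hβm : β.degree ≤ m := by omega
    have hmem : ∀ k γ, γ.degree ≤ m → actAux b m k γ ∈ degLE K ι (γ.degree + 1) := by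
      intro k γ hγ
      have := Submodule.add_mem _ (degLE_mono (Nat.le_succ _) (ih k γ hγ))
        (single_mem_degLE (K := K) (by simp : (γ + single k 1).degree ≤ γ.degree + 1) 1)
      rwa [sub_add_cancel] at this
    rw [actAux_succ_add_single b m hβ hji, hdeg, add_assoc, add_sub_cancel_left]
    refine Submodule.add_mem _ (linearCombination_mem_degLE (ih i β hβm) fun γ hγ =>
      degLE_mono (by omega) (hmem j γ (hγ.trans hβm))) ?_
    rw [linearCombination_apply]
    exact Submodule.finsuppSum_mem _ _ _ _ fun k _ => Submodule.smul_mem _ _ (hmem k β hβm)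

lemma actAux_succ (m : ℕ) :
    ∀ (i : ι) (α : ι →₀ ℕ), α.degree ≤ m → actAux b (m + 1) i α = actAux b m i α := by
  induction m with
  | zero =>
    intro i α hα
    obtain rfl : α = 0 := (degree_eq_zero_iff α).1 (Nat.le_zero.1 hα)
    rw [actAux_of_le b _ (by simp), actAux_of_le b _ (by simp)]
  | succ m ih =>
    intro i α hα
    by_cases h : ∀ k ∈ α.support, i ≤ k
    · rw [actAux_of_le b _ h, actAux_of_le b _ h]
    obtain ⟨β, j, rfl, hβ, hji⟩ := exists_eq_add_single_of_not_le h
    have hβm : β.degree ≤ m := by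
      simp only [map_add, degree_single] at hα
      omega
    rw [actAux_succ_add_single b _ hβ hji, actAux_succ_add_single b _ hβ hji, ih i β hβm,
      linearCombination_congr_of_mem_degLE (actAux_sub_mem_degLE b m i β hβm)
        fun γ hγ => ih j γ (hγ.trans hβm)]
    simp only [ih _ β hβm]

lemma actAux_eq_of_degree_le {m : ℕ} (i : ι) {α : ι →₀ ℕ} (h : α.degree ≤ m) :
    actAux b m i α = actAux b α.degree i α := by
  induction m, h using Nat.le_induction with
  | base => rfl
  | succ m hm ih => rw [actAux_succ b m i α hm, ih]

/-- `L` acting on the polynomial ring `K[x_i : i ∈ ι]`, modelled as `(ι →₀ ℕ) →₀ K`, so that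
`X_i · x^γ = x^(γ + e_i)` whenever `i ≤ min γ`. -/
def rep : L →ₗ[K] Module.End K ((ι →₀ ℕ) →₀ K) :=
  b.constr K fun i => linearCombination K fun α => actAux b α.degree i α

lemma rep_basis_single (i : ι) (γ : ι →₀ ℕ) :
    rep b (b i) (single γ 1) = actAux b γ.degree i γ := by
  simp [rep]

lemma rep_apply (X : L) (p : (ι →₀ ℕ) →₀ K) :
    rep b X p = linearCombination K (fun k => rep b (b k) p) (b.repr X) := by
  conv_lhs => rw [← b.linearCombination_repr X]
  simp only [linearCombination_apply, Finsupp.sum, map_sum, map_smul, LinearMap.sum_apply,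
    LinearMap.smul_apply]

lemma rep_basis_single_of_le {i : ι} {γ : ι →₀ ℕ} (h : ∀ k ∈ γ.support, i ≤ k) :
    rep b (b i) (single γ 1) = single (γ + single i 1) 1 := by
  rw [rep_basis_single, actAux_of_le b _ h]

lemma rep_basis_single_sub_mem_degLE (i : ι) (γ : ι →₀ ℕ) :
    rep b (b i) (single γ 1) - single (γ + single i 1) 1 ∈ degLE K ι γ.degree := by
  rw [rep_basis_single]
  exact actAux_sub_mem_degLE b _ i γ le_rfl

lemma rep_basis_eq_linearCombination {p : (ι →₀ ℕ) →₀ K} {d : ℕ} (hp : p ∈ degLE K ι d)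
    (i : ι) : rep b (b i) p = linearCombination K (actAux b d i) p := by
  simp only [rep, Module.Basis.constr_basis]
  exact linearCombination_congr_of_mem_degLE hp fun γ hγ => (actAux_eq_of_degree_le b i hγ).symm

lemma rep_basis_single_add_single {j s : ι} {β : ι →₀ ℕ} (hβ : ∀ k ∈ β.support, j ≤ k)
    (hjs : j < s) :
    rep b (b s) (single (β + single j 1) 1)
      = rep b (b j) (rep b (b s) (single β 1)) + rep b ⁅b s, b j⁆ (single β 1) := by
  have hlow : rep b (b j) (rep b (b s) (single β 1) - single (β + single s 1) 1)
      = linearCombination K (actAux b β.degree j)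
          (actAux b β.degree s β - single (β + single s 1) 1) := by
    rw [rep_basis_eq_linearCombination b (rep_basis_single_sub_mem_degLE b s β), rep_basis_single]
  have htop : rep b (b j) (single (β + single s 1) 1) = single (β + single j 1 + single s 1) 1 := by
    rw [rep_basis_single_of_le b (le_of_mem_support_add_single hβ hjs.le), add_right_comm]
  have hlie : rep b ⁅b s, b j⁆ (single β 1)
      = linearCombination K (fun k => actAux b β.degree k β) (b.repr ⁅b s, b j⁆) := by
    simp only [rep_apply b ⁅b s, b j⁆, rep_basis_single]
  have hdeg : (β + single j 1).degree = β.degree + 1 := by simp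
  rw [rep_basis_single, hdeg, actAux_succ_add_single b _ hβ hjs, ← hlow, ← hlie, map_sub, htop]
  abel

lemma rep_comm_of_le {i k : ι} (hki : k < i) {γ : ι →₀ ℕ} (hγ : ∀ t ∈ γ.support, k ≤ t) :
    rep b (b i) (rep b (b k) (single γ 1)) - rep b (b k) (rep b (b i) (single γ 1))
      = rep b ⁅b i, b k⁆ (single γ 1) := by
  rw [rep_basis_single_of_le b hγ, rep_basis_single_add_single b hγ hki]
  abel

def CommutesOn (d : ℕ) : Prop :=
  ∀ X Y : L, ∀ p ∈ degLE K ι d, rep b X (rep b Y p) - rep b Y (rep b X p) = rep b ⁅X, Y⁆ p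

lemma rep_comm_basis_single {i k : ι} (hki : k < i) {γ : ι →₀ ℕ}
    (ih : ∀ d < γ.degree, CommutesOn b d) :
    rep b (b i) (rep b (b k) (single γ 1)) - rep b (b k) (rep b (b i) (single γ 1))
      = rep b ⁅b i, b k⁆ (single γ 1) := by
  by_cases hk : ∀ t ∈ γ.support, k ≤ t
  · exact rep_comm_of_le b hki hk
  -- `x^γ = X_j x^β` with `j = min γ < k`; expand `X_i X_k X_j x^β` and `X_k X_i X_j x^β` by
  -- moving `X_j` to the front, then compare using the induction hypothesis at `deg β` and Jacobi.
  obtain ⟨β, j, rfl, hβ, hjk⟩ := exists_eq_add_single_of_not_le hk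
  have IH := ih β.degree (by simp)
  set z : (ι →₀ ℕ) →₀ K := single β 1
  have hz : z ∈ degLE K ι β.degree := single_mem_degLE le_rfl 1
  have hpast : ∀ s s', j < s → j < s' → rep b (b s) (rep b (b j) (rep b (b s') z))
      = rep b (b j) (rep b (b s) (rep b (b s') z)) + rep b ⁅b s, b j⁆ (rep b (b s') z) := by
    intro s s' hs hs'
    rw [← sub_add_cancel (rep b (b s') z) (single (β + single s' 1) 1)]
    simp only [map_add]
    rw [← IH (b s) (b j) _ (rep_basis_single_sub_mem_degLE b s' β),
      ← rep_comm_of_le b hs (le_of_mem_support_add_single hβ hs'.le)]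
    abel
  have jacobi : ⁅⁅b i, b k⁆, b j⁆ = ⁅b i, ⁅b k, b j⁆⁆ + ⁅⁅b i, b j⁆, b k⁆ := by
    rw [leibniz_lie, ← lie_skew (b k)]
    abel
  have hA := congrArg (rep b (b j)) (IH (b i) (b k) z hz)
  have hB := IH (b i) ⁅b k, b j⁆ z hz
  have hC := IH ⁅b i, b j⁆ (b k) z hz
  have hD := IH ⁅b i, b k⁆ (b j) z hz
  rw [jacobi, map_add, LinearMap.add_apply] at hD
  rw [map_sub] at hA
  rw [rep_basis_single_add_single b hβ hjk, rep_basis_single_add_single b hβ (hjk.trans hki),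
    ← rep_basis_single_of_le b hβ, map_add, map_add, hpast i k (hjk.trans hki) hjk,
    hpast k i hjk (hjk.trans hki)]
  linear_combination (norm := abel) hA + hB + hC - hD

lemma commutesOn_of_basis {d : ℕ} (h : ∀ γ : ι →₀ ℕ, γ.degree ≤ d → ∀ i k : ι, k < i →
      rep b (b i) (rep b (b k) (single γ 1)) - rep b (b k) (rep b (b i) (single γ 1))
        = rep b ⁅b i, b k⁆ (single γ 1)) :
    CommutesOn b d := by
  intro X Y p hp
  suffices hker :
      degLE K ι d ≤ LinearMap.ker (rep b X * rep b Y - rep b Y * rep b X - rep b ⁅X, Y⁆) by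
    simpa [sub_eq_zero] using hker hp
  rw [degLE, supported_eq_span_single, Submodule.span_le]
  rintro _ ⟨γ, hγ, rfl⟩
  let B : L →ₗ[K] L →ₗ[K] (ι →₀ ℕ) →₀ K := LinearMap.mk₂ K
    (fun X Y => rep b X (rep b Y (single γ 1)) - rep b Y (rep b X (single γ 1))
      - rep b ⁅X, Y⁆ (single γ 1))
    (by intros; simp only [map_add, add_lie, LinearMap.add_apply]; abel)
    (by intros; simp only [map_smul, smul_lie, LinearMap.smul_apply, smul_sub])
    (by intros; simp only [map_add, lie_add, LinearMap.add_apply]; abel)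
    (by intros; simp only [map_smul, lie_smul, LinearMap.smul_apply, smul_sub])
  have hB : B = 0 := LinearMap.ext_basis b b fun i k => by
    rcases lt_trichotomy k i with hki | rfl | hik
    · simp [B, h γ hγ i k hki]
    · simp [B]
    · simp only [B, LinearMap.mk₂_apply, LinearMap.zero_apply]
      rw [← lie_skew (b i) (b k), map_neg, LinearMap.neg_apply, ← h γ hγ k i hik]
      abel
  simpa [B, sub_eq_zero] using LinearMap.congr_fun₂ hB X Y

lemma commutesOn (d : ℕ) : CommutesOn b d := by
  induction d using Nat.strong_induction_on with
  | _ d ih =>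
    exact commutesOn_of_basis b fun γ hγ i k hki =>
      rep_comm_basis_single b hki fun e he => ih e (he.trans_le hγ)

lemma rep_lie (X Y : L) : rep b ⁅X, Y⁆ = ⁅rep b X, rep b Y⁆ := by
  refine LinearMap.ext fun p => ?_
  rw [LieRing.of_associative_ring_bracket, LinearMap.sub_apply, Module.End.mul_apply,
    Module.End.mul_apply,
    commutesOn b (p.support.sup degree) X Y p fun γ hγ => Finset.le_sup (f := degree) hγ]

def actOnOne : FreeAlgebra K ι →ₗ[K] (ι →₀ ℕ) →₀ K :=
  (LinearMap.applyₗ (single 0 1)).comp (FreeAlgebra.lift K fun i => rep b (b i)).toLinearMap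

lemma lift_rep_prod_of_sorted {l : List ι} (hl : l.Pairwise (· ≤ ·)) :
    FreeAlgebra.lift K (fun i => rep b (b i)) (l.map (FreeAlgebra.ι K)).prod (single 0 1)
      = single (Multiset.toFinsupp (l : Multiset ι)) 1 := by
  induction l with
  | nil => simp
  | cons i t ih =>
    have hle : ∀ k ∈ (Multiset.toFinsupp (t : Multiset ι)).support, i ≤ k := by
      simpa using (List.pairwise_cons.1 hl).1
    rw [List.map_cons, List.prod_cons, map_mul, Module.End.mul_apply, ih hl.of_cons,
      FreeAlgebra.lift_ι_apply, rep_basis_single_of_le b hle, ← Multiset.cons_coe,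
      ← Multiset.singleton_add, Multiset.toFinsupp_add, Multiset.toFinsupp_singleton, add_comm]

end Representation

section Independence

variable {K : Type} [Field K] {n : ℕ} {L : Type} [LieRing L] [LieAlgebra K L]
  (b : Module.Basis (Fin n) K L)

lemma count_word (α : Fin n → ℕ) (k : Fin n) : (word n α).count k = α k := by
  rw [word, List.count_flatMap, ← Fin.sum_univ_def]
  simp [List.count_replicate]

lemma word_sorted (α : Fin n → ℕ) : (word n α).Pairwise (· ≤ ·) := by
  rw [word, List.pairwise_flatMap]
  refine ⟨fun i _ => List.pairwise_replicate.2 (Or.inr le_rfl),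
    (List.pairwise_lt_finRange n).imp fun hij x hx y hy => ?_⟩
  rw [List.eq_of_mem_replicate hx, List.eq_of_mem_replicate hy]
  exact hij.le

lemma actOnOne_word (α : Fin n → ℕ) :
    actOnOne b ((word n α).map (FreeAlgebra.ι K)).prod = single (equivFunOnFinite.symm α) 1 := by
  rw [actOnOne, LinearMap.comp_apply, AlgHom.toLinearMap_apply, LinearMap.applyₗ_apply_apply,
    lift_rep_prod_of_sorted b (word_sorted α)]
  congr 1
  ext k
  simp [Multiset.toFinsupp_apply, count_word]

lemma lift_rep_emb (X : L) : FreeAlgebra.lift K (fun i => rep b (b i)) (emb K n b X) = rep b X := by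
  conv_rhs => rw [← b.sum_repr X]
  simp only [emb, map_sum, map_smul, FreeAlgebra.lift_ι_apply]

lemma Jspan_le_ker_actOnOne : Jspan K n b ≤ LinearMap.ker (actOnOne b) := by
  rw [Jspan, Submodule.span_le]
  rintro _ ⟨P, Q, X, Y, rfl⟩
  simp [actOnOne, lift_rep_emb, rep_lie, LieRing.of_associative_ring_bracket]

theorem linearIndependent_mkQ_word :
    LinearIndependent K fun α : Fin n → ℕ =>
      (Jspan K n b).mkQ ((word n α).map (FreeAlgebra.ι K)).prod := by
  refine LinearIndependent.of_comp ((Jspan K n b).liftQ (actOnOne b) (Jspan_le_ker_actOnOne b)) ?_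
  have hcomp : (Jspan K n b).liftQ (actOnOne b) (Jspan_le_ker_actOnOne b) ∘
      (fun α : Fin n → ℕ => (Jspan K n b).mkQ ((word n α).map (FreeAlgebra.ι K)).prod)
      = fun α => single (equivFunOnFinite.symm α) 1 :=
    funext fun α => by simp [actOnOne_word]
  rw [hcomp]
  exact (Finsupp.basisSingleOne (R := K)).linearIndependent.comp _
    (equivFunOnFinite (α := Fin n) (M := ℕ)).symm.injective

end Independence

section Spanning

variable {K : Type} [Field K] {n : ℕ}

lemma Fdeg_mono {m m' : ℕ} (h : m ≤ m') : Fdeg K n m ≤ Fdeg K n m' :=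
  Submodule.span_mono fun _ ⟨l, hl, hx⟩ => ⟨l, hl.trans h, hx⟩

lemma prod_mem_Fdeg (l : List (Fin n)) : (l.map (FreeAlgebra.ι K)).prod ∈ Fdeg K n l.length :=
  Submodule.subset_span ⟨l, le_rfl, rfl⟩

lemma Fdeg_mul (m m' : ℕ) : Fdeg K n m * Fdeg K n m' ≤ Fdeg K n (m + m') := by
  rw [Fdeg, Fdeg, Submodule.span_mul_span]
  refine Submodule.span_le.2 ?_
  rintro _ ⟨_, ⟨l, hl, rfl⟩, _, ⟨l', hl', rfl⟩, rfl⟩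
  dsimp only
  rw [← List.prod_append, ← List.map_append]
  exact Fdeg_mono (by rw [List.length_append]; omega) (prod_mem_Fdeg _)

lemma mul_mem_Fdeg {a a' : FreeAlgebra K (Fin n)} {m m' : ℕ} (ha : a ∈ Fdeg K n m)
    (ha' : a' ∈ Fdeg K n m') : a * a' ∈ Fdeg K n (m + m') :=
  Fdeg_mul m m' (Submodule.mul_mem_mul ha ha')

lemma ι_mem_Fdeg_one (i : Fin n) : FreeAlgebra.ι K i ∈ Fdeg K n 1 := by
  simpa using prod_mem_Fdeg (K := K) [i]

lemma exists_mem_Fdeg (a : FreeAlgebra K (Fin n)) : ∃ m, a ∈ Fdeg K n m := by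
  induction a using FreeAlgebra.induction with
  | grade0 r =>
    exact ⟨0, by simpa [Algebra.algebraMap_eq_smul_one] using
      Submodule.smul_mem _ r (prod_mem_Fdeg (K := K) [])⟩
  | grade1 i => exact ⟨1, ι_mem_Fdeg_one i⟩
  | mul a a' ha ha' =>
    obtain ⟨m, ha⟩ := ha
    obtain ⟨m', ha'⟩ := ha'
    exact ⟨m + m', mul_mem_Fdeg ha ha'⟩
  | add a a' ha ha' =>
    obtain ⟨m, ha⟩ := ha
    obtain ⟨m', ha'⟩ := ha'
    exact ⟨max m m', Submodule.add_mem _ (Fdeg_mono (le_max_left m m') ha)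
      (Fdeg_mono (le_max_right m m') ha')⟩

variable {L : Type} [LieRing L] [LieAlgebra K L] (b : Module.Basis (Fin n) K L)

lemma emb_mem_Fdeg_one (X : L) : emb K n b X ∈ Fdeg K n 1 :=
  Submodule.sum_mem _ fun k _ => Submodule.smul_mem _ _ (ι_mem_Fdeg_one k)

lemma emb_basis (i : Fin n) : emb K n b (b i) = FreeAlgebra.ι K i := by
  simp [emb, Finsupp.single_apply]

lemma mul_mem_Jspan {z : FreeAlgebra K (Fin n)} (a : FreeAlgebra K (Fin n)) (hz : z ∈ Jspan K n b) :
    a * z ∈ Jspan K n b := by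
  induction hz using Submodule.span_induction with
  | mem x hx =>
    obtain ⟨P, Q, X, Y, rfl⟩ := hx
    exact Submodule.subset_span ⟨a * P, Q, X, Y, by simp only [mul_assoc]⟩
  | zero => simp
  | add x y _ _ hx hy => simpa [mul_add] using Submodule.add_mem _ hx hy
  | smul c x _ hx => simpa using Submodule.smul_mem _ c hx

lemma prod_sub_prod_mem_of_perm {l₁ l₂ : List (Fin n)} (h : l₁.Perm l₂) :
    (l₁.map (FreeAlgebra.ι K)).prod - (l₂.map (FreeAlgebra.ι K)).prod
      ∈ Jspan K n b ⊔ Fdeg K n (l₁.length - 1) := by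
  induction h with
  | nil => simp
  | @cons x l₁ l₂ h ih =>
    obtain rfl | hne := eq_or_ne l₁ []
    · simp [List.nil_perm.1 h]
    have hlen := List.length_pos_iff.2 hne
    obtain ⟨z, hz, f, hf, hzf⟩ := Submodule.mem_sup.1 ih
    refine Submodule.mem_sup.2 ⟨_, mul_mem_Jspan b (FreeAlgebra.ι K x) hz, _,
      Fdeg_mono ?_ (mul_mem_Fdeg (ι_mem_Fdeg_one x) hf), ?_⟩
    · simp only [List.length_cons]
      omega
    · simp [← mul_add, hzf, mul_sub]
  | swap x y l =>
    refine Submodule.mem_sup.2 ⟨_, Submodule.subset_span ⟨1, (l.map (FreeAlgebra.ι K)).prod,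
      b y, b x, rfl⟩, _, Fdeg_mono (by simp only [List.length_cons]; omega)
        (mul_mem_Fdeg (emb_mem_Fdeg_one b ⁅b y, b x⁆) (prod_mem_Fdeg l)), ?_⟩
    simp only [emb_basis, one_mul, List.map_cons, List.prod_cons]
    noncomm_ring
  | trans h₁₂ _ ih₁₂ ih₂₃ =>
    rw [← sub_add_sub_cancel]
    exact Submodule.add_mem _ ih₁₂ (h₁₂.length_eq ▸ ih₂₃)

lemma Fdeg_le_comap_span_word (m : ℕ) :
    Fdeg K n m ≤ (Submodule.span K (Set.range fun α : Fin n → ℕ =>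
      (Jspan K n b).mkQ ((word n α).map (FreeAlgebra.ι K)).prod)).comap (Jspan K n b).mkQ := by
  induction m with
  | zero =>
    refine Submodule.span_le.2 ?_
    rintro _ ⟨l, hl, rfl⟩
    obtain rfl := List.eq_nil_of_length_eq_zero (Nat.le_zero.1 hl)
    have hword : word n 0 = [] := List.flatMap_eq_nil_iff.2 fun _ _ => rfl
    exact Submodule.subset_span ⟨0, by simp only [hword]⟩
  | succ m ih =>
    refine Submodule.span_le.2 ?_
    rintro _ ⟨l, hl, rfl⟩
    have hperm : l.Perm (word n fun k => l.count k) :=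
      List.perm_iff_count.2 fun k => (count_word (fun k => l.count k) k).symm
    obtain ⟨z, hz, f, hf, hzf⟩ := Submodule.mem_sup.1 (prod_sub_prod_mem_of_perm b hperm)
    rw [eq_sub_iff_add_eq] at hzf
    have hz0 : (Jspan K n b).mkQ z = 0 := (Submodule.Quotient.mk_eq_zero _).2 hz
    rw [SetLike.mem_coe, Submodule.mem_comap, ← hzf, map_add, map_add, hz0, zero_add]
    exact Submodule.add_mem _ (ih (Fdeg_mono (by omega) hf)) (Submodule.subset_span ⟨_, rfl⟩)

theorem span_mkQ_word_eq_top :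
    Submodule.span K (Set.range fun α : Fin n → ℕ =>
      (Jspan K n b).mkQ ((word n α).map (FreeAlgebra.ι K)).prod) = ⊤ := by
  refine eq_top_iff.2 fun x _ => ?_
  obtain ⟨a, rfl⟩ := Submodule.mkQ_surjective _ x
  obtain ⟨m, ha⟩ := exists_mem_Fdeg a
  exact Fdeg_le_comap_span_word b m ha

end Spanning

end PBW

theorem pbw_ordered_monomials_basis_general (K : Type) [Field K]
    (n : ℕ) (L : Type) [LieRing L] [LieAlgebra K L] (b : Module.Basis (Fin n) K L) :
    LinearIndependent K
        (fun α : Fin n → ℕ =>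
          (Jspan K n b).mkQ (((word n α).map (FreeAlgebra.ι K)).prod)) ∧
      Submodule.span K
          (Set.range fun α : Fin n → ℕ =>
            (Jspan K n b).mkQ (((word n α).map (FreeAlgebra.ι K)).prod)) = ⊤ :=
  ⟨PBW.linearIndependent_mkQ_word b, PBW.span_mkQ_word_eq_top b⟩

theorem pbw_ordered_monomials_basis (K : Type) [Field K] [CharZero K]
    (n : ℕ) (L : Type) [LieRing L] [LieAlgebra K L] (b : Module.Basis (Fin n) K L) :
    LinearIndependent K
        (fun α : Fin n → ℕ =>
          (Jspan K n b).mkQ (((word n α).map (FreeAlgebra.ι K)).prod)) ∧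
      Submodule.span K
          (Set.range fun α : Fin n → ℕ =>
            (Jspan K n b).mkQ (((word n α).map (FreeAlgebra.ι K)).prod)) = ⊤ :=
  pbw_ordered_monomials_basis_general K n L b

end
end
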